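/- Theorem 3.4 (algebraic formula for Model 4, substitution form): For every (i,j,k) ∈ ℤ³, one has Z₄(i,j,k) = X'_{r(i,j,k)} · (A')^{α(i,j,k)} (B')^{β(i,j,k)} (C')^{γ(i,j,k)} (D')^{δ(i,j,k)} (E')^{ε(i,j,k)} in F; that is, the Model 4 closed formula Z₄(i,j,k) equals the Model 1 closed formula of Theorem 3.1 with x₁ replaced throughout by Y₁'' = (x₆⁴+x₁x₂x₃x₆+2x₄x₅x₆²+x₄²x₅²)/(x₁x₃x₄), x₃ replaced by Y₃'' = (x₄x₅+x₆²)/x₃, x₄ replaced by Y₄'' = (x₁x₂x₃+x₄x₅x₆+x₆³)/(x₃x₄), and x₂,x₅,x₆ left unchanged. -/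

import Mathlib

noncomputable section

open MvPolynomial

abbrev F : Type := FractionRing (MvPolynomial (Fin 6) ℚ)

/-- The images of the six indeterminates in the field `F = ℚ(x₁,…,x₆)`. -/
def xv (t : Fin 6) : F := algebraMap (MvPolynomial (Fin 6) ℚ) F (X t)

def x1 : F := xv 0
def x2 : F := xv 1
def x3 : F := xv 2
def x4 : F := xv 3
def x5 : F := xv 4
def x6 : F := xv 5

/-- Chooses among six field elements according to the residue of `2(i-j)+3k` mod 6:
residues 5,2,4,1,3,0 select the 1st,…,6th element respectively. -/
def pick (v1 v2 v3 v4 v5 v6 : F) (i j k : ℤ) : F :=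
  if (2*(i-j)+3*k) % 6 = 5 then v1
  else if (2*(i-j)+3*k) % 6 = 2 then v2
  else if (2*(i-j)+3*k) % 6 = 4 then v3
  else if (2*(i-j)+3*k) % 6 = 1 then v4
  else if (2*(i-j)+3*k) % 6 = 3 then v5
  else v6

/-- α(i,j,k) = ⌊(P+i+2j)/3⌋ with P = i²+ij+j²+1. -/
def expA (i j : ℤ) : ℤ := Int.fdiv ((i^2+i*j+j^2+1) + i + 2*j) 3
/-- β(i,j,k) = ⌊(P+2i+j)/3⌋. -/
def expB (i j : ℤ) : ℤ := Int.fdiv ((i^2+i*j+j^2+1) + 2*i + j) 3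
/-- γ(i,j,k) = ⌊P/3⌋. -/
def expC (i j : ℤ) : ℤ := Int.fdiv (i^2+i*j+j^2+1) 3
/-- δ(i,j,k) = ⌊(k−1)²/4⌋. -/
def expD (k : ℤ) : ℤ := Int.fdiv ((k-1)^2) 4
/-- ε(i,j,k) = ⌊k²/4⌋. -/
def expE (k : ℤ) : ℤ := Int.fdiv (k^2) 4

def Y1'' : F := (x6^4 + x1*x2*x3*x6 + 2*x4*x5*x6^2 + x4^2*x5^2) / (x1*x3*x4)
def Y3'' : F := (x4*x5 + x6^2) / x3
def Y4'' : F := (x1*x2*x3 + x4*x5*x6 + x6^3) / (x3*x4)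

def A4 : F := x1 / x2
def B4 : F := x3 / x1
def C4 : F := (x6^6 + 2*x1*x2*x3*x6^3 + x1^2*x2^2*x3^2 + 3*x4*x5*x6^4
    + 2*x1*x2*x3*x4*x5*x6 + 3*x4^2*x5^2*x6^2 + x4^3*x5^3) / (x1*x3^2*x4*x5*x6)
def D4 : F := x4 / x5
def E4 : F := (x6^6 + 2*x1*x2*x3*x6^3 + x1^2*x2^2*x3^2 + 3*x4*x5*x6^4
    + 3*x1*x2*x3*x4*x5*x6 + 3*x4^2*x5^2*x6^2 + x4^3*x5^3) / (x1*x2*x3*x4^2*x6)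

/-- The Model 4 closed formula Z₄(i,j,k) of Theorem 3.4. -/
def Z4 (i j k : ℤ) : F :=
  pick Y1'' x2 Y3'' Y4'' x5 x6 i j k *
    A4 ^ expA i j * B4 ^ expB i j * C4 ^ expC i j * D4 ^ expD k * E4 ^ expE k

-- The Model 1 coefficients of Theorem 3.1 with x₁ ↦ Y₁'', x₃ ↦ Y₃'', x₄ ↦ Y₄''.
def A' : F := (Y3''*x5 + Y4''*x6) / (Y1''*x2)
def B' : F := (Y1''*x6 + x2*x5) / (Y3''*Y4'')
def C' : F := (Y1''*Y3'' + x2*Y4'') / (x5*x6)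
def D' : F := (Y1''*Y3''*x6 + x2*Y3''*x5 + x2*Y4''*x6) / (Y1''*Y4''*x5)
def E' : F := (x2*Y4''*x5 + Y1''*Y3''*x5 + Y1''*Y4''*x6) / (x2*Y3''*x6)

/-!
Each Model 1 coefficient A', …, E' taken at the substituted variables collapses to the
corresponding Model 4 coefficient A₄, …, E₄, so the two closed formulas agree factor by factor.
Each collapse is a rational-function identity, checked by clearing denominators. This needs the
xᵢ and the numerators of Y₁'', Y₃'', Y₄'' to be nonzero in `F`, which holds because they are
images of polynomials that do not vanish at (1, …, 1).
-/

theorem MvPolynomial.aeval_algebraMap_X_ne_zero {σ R K : Type*} [CommRing R] [CommRing K]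
    [Algebra R K] [Algebra (MvPolynomial σ R) K] [IsScalarTower R (MvPolynomial σ R) K]
    [IsFractionRing (MvPolynomial σ R) K] {p : MvPolynomial σ R} (a : σ → R) (h : eval a p ≠ 0) :
    aeval (fun t => algebraMap (MvPolynomial σ R) K (X t)) p ≠ 0 := by
  rw [← Function.comp_def, aeval_algebraMap_apply, aeval_X_left_apply, Ne,
    IsFractionRing.to_map_eq_zero_iff]
  rintro rfl
  simp at h

def Y1''num : F := x6^4 + x1*x2*x3*x6 + 2*x4*x5*x6^2 + x4^2*x5^2
def Y3''num : F := x4*x5 + x6^2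
def Y4''num : F := x1*x2*x3 + x4*x5*x6 + x6^3

theorem Y1''_eq : Y1'' = Y1''num / (x1*x3*x4) := rfl
theorem Y3''_eq : Y3'' = Y3''num / x3 := rfl
theorem Y4''_eq : Y4'' = Y4''num / (x3*x4) := rfl

theorem xv_ne_zero (t : Fin 6) : xv t ≠ 0 := by
  simp [xv]

@[simp] theorem x1_ne_zero : x1 ≠ 0 := xv_ne_zero 0
@[simp] theorem x2_ne_zero : x2 ≠ 0 := xv_ne_zero 1
@[simp] theorem x3_ne_zero : x3 ≠ 0 := xv_ne_zero 2
@[simp] theorem x4_ne_zero : x4 ≠ 0 := xv_ne_zero 3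
@[simp] theorem x5_ne_zero : x5 ≠ 0 := xv_ne_zero 4
@[simp] theorem x6_ne_zero : x6 ≠ 0 := xv_ne_zero 5

@[simp] theorem Y1''num_ne_zero : Y1''num ≠ 0 := by
  have h := aeval_algebraMap_X_ne_zero (σ := Fin 6) (R := ℚ) (K := F)
    (p := X 5 ^ 4 + X 0 * X 1 * X 2 * X 5 + 2 * X 3 * X 4 * X 5 ^ 2 + X 3 ^ 2 * X 4 ^ 2)
    (fun _ => 1) (by norm_num)
  simpa only [Y1''num, x1, x2, x3, x4, x5, x6, xv, map_add, map_mul, map_pow, map_ofNat, aeval_X]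
    using h

@[simp] theorem Y3''num_ne_zero : Y3''num ≠ 0 := by
  have h := aeval_algebraMap_X_ne_zero (σ := Fin 6) (R := ℚ) (K := F)
    (p := X 3 * X 4 + X 5 ^ 2) (fun _ => 1) (by norm_num)
  simpa only [Y3''num, x4, x5, x6, xv, map_add, map_mul, map_pow, aeval_X] using h

@[simp] theorem Y4''num_ne_zero : Y4''num ≠ 0 := by
  have h := aeval_algebraMap_X_ne_zero (σ := Fin 6) (R := ℚ) (K := F)
    (p := X 0 * X 1 * X 2 + X 3 * X 4 * X 5 + X 5 ^ 3) (fun _ => 1) (by norm_num)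
  simpa only [Y4''num, x1, x2, x3, x4, x5, x6, xv, map_add, map_mul, map_pow, aeval_X] using h

theorem A'_eq_A4 : A' = A4 := by
  rw [A', A4, Y1''_eq, Y3''_eq, Y4''_eq]
  field_simp
  simp only [Y1''num, Y3''num, Y4''num]
  ring

theorem B'_eq_B4 : B' = B4 := by
  rw [B', B4, Y1''_eq, Y3''_eq, Y4''_eq]
  field_simp
  simp only [Y1''num, Y3''num, Y4''num]
  ring

theorem C'_eq_C4 : C' = C4 := by
  rw [C', C4, Y1''_eq, Y3''_eq, Y4''_eq]
  field_simp
  simp only [Y1''num, Y3''num, Y4''num]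
  ring

theorem D'_eq_D4 : D' = D4 := by
  rw [D', D4, Y1''_eq, Y3''_eq, Y4''_eq]
  field_simp
  simp only [Y1''num, Y3''num, Y4''num]
  ring

theorem E'_eq_E4 : E' = E4 := by
  rw [E', E4, Y1''_eq, Y3''_eq, Y4''_eq]
  field_simp
  simp only [Y1''num, Y3''num, Y4''num]
  ring

/-- Theorem 3.4 (algebraic formula for Model 4, substitution form). -/
theorem model4_substitution_form (i j k : ℤ) :
    Z4 i j k =
      pick Y1'' x2 Y3'' Y4'' x5 x6 i j k *
        A' ^ expA i j * B' ^ expB i j * C' ^ expC i j * D' ^ expD k * E' ^ expE k := by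
  rw [Z4, A'_eq_A4, B'_eq_B4, C'_eq_C4, D'_eq_D4, E'_eq_E4]
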